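/- Suppose $H : (1,\infty) \times [0,T) \times (0,\infty) \to [0,\infty)$ satisfies, for all $p \ge p_0 > 1$, $0 \le \tau < \tau' < T$, $0 < r' < r$: $H(\tfrac{3}{2}p, \tau', r') \le A\left(\hat{C}(\tau') + \frac{1}{\tau' - \tau} + \frac{C_1}{(r - r')^2}\right)^{3/2} H(p, \tau, r)^{3/2}$, where $\hat{C}(\tau') = C_p \mu^3 A^2 (\tau')^{-1}$ with $C_p$ bounded uniformly by $C$ for $p \ge p_0$, and $H$ is nonincreasing in $\tau$ and nondecreasing in $r$. Fix $t \in (0,T)$ and $r > 0$, and set $p_k = p_0 (3/2)^k$, $\tau_k = t(1 - (3/2)^{-k-1})$, $r_k = \frac{r}{2}(1 + (3/2)^{-k/2})$. Then there is a constant $C'$ depending only on $C$, $C_1$, $p_0$ such that $\limsup_{k \to \infty} H(p_k, \tau_k, r_k)^{1/p_k} \le C' A^{2/p_0} \left((1 + A^2\mu^3) t^{-1} + r^{-2}\right)^{3/p_0} H(p_0, 0, r)^{1/p_0}$. -/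

import Mathlib

open Filter Real

/-!
Write `Y k = H (p_k, τ_k, r_k)`. Since `τ_{k+1} - τ_k` is comparable to `t (3/2)^{-k}` and
`r_k - r_{k+1}` to `r (3/2)^{-k/2}`, the bracket in the recursion between consecutive parameters
is at most `(3/2)^k K E` with `K = 2C + 5 + 144 C₁` and `E = (1 + A²μ³)/t + 1/r²`, so
`Y (k+1) ≤ M q^k Y k ^ (3/2)` with `M = A (K E)^{3/2}` and `q = (3/2)^{3/2}`. The weighted sequence
`g k = (M q^{k+2})² Y k` then satisfies `g (k+1) ≤ g k ^ (3/2)`, hence `g k ≤ g 0 ^ (3/2)^k`; the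
weight tends to infinity, so after taking `p_k`-th roots it can be dropped, leaving
`((M q²)² Y 0)^{1/p₀}`, and `(M q²)² = (3/2)⁶ K³ A² E³`.
-/

lemma sq_rpow_three_halves {x : ℝ} (hx : 0 ≤ x) : (x ^ 2) ^ (3 / 2 : ℝ) = x ^ 3 := by
  rw [← rpow_natCast, ← rpow_mul hx]
  norm_num

lemma rpow_three_halves_sq {x : ℝ} (hx : 0 ≤ x) : (x ^ (3 / 2 : ℝ)) ^ 2 = x ^ 3 := by
  rw [rpow_pow_comm hx, sq_rpow_three_halves hx]

lemma le_rpow_pow_of_succ_le_rpow {g : ℕ → ℝ} {θ : ℝ} (hg : ∀ k, 0 ≤ g k) (hθ : 0 ≤ θ)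
    (h : ∀ k, g (k + 1) ≤ g k ^ θ) (k : ℕ) : g k ≤ g 0 ^ θ ^ k := by
  induction k with
  | zero => simp
  | succ k ih =>
    calc g (k + 1) ≤ g k ^ θ := h k
      _ ≤ (g 0 ^ θ ^ k) ^ θ := rpow_le_rpow (hg k) ih hθ
      _ = g 0 ^ θ ^ (k + 1) := by rw [← rpow_mul (hg 0), pow_succ]

lemma moser_iteration {f : ℕ → ℝ} {M q : ℝ} (hf : ∀ k, 0 ≤ f k) (hM : 0 ≤ M) (hq : 0 ≤ q)
    (h : ∀ k, f (k + 1) ≤ M * q ^ k * f k ^ (3 / 2 : ℝ)) (k : ℕ) :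
    (M * q ^ (k + 2)) ^ 2 * f k ≤ ((M * q ^ 2) ^ 2 * f 0) ^ (3 / 2 : ℝ) ^ k := by
  have hweighted : ∀ k, (M * q ^ (k + 1 + 2)) ^ 2 * f (k + 1) ≤
      ((M * q ^ (k + 2)) ^ 2 * f k) ^ (3 / 2 : ℝ) := fun k =>
    calc (M * q ^ (k + 1 + 2)) ^ 2 * f (k + 1)
        ≤ (M * q ^ (k + 3)) ^ 2 * (M * q ^ k * f k ^ (3 / 2 : ℝ)) := by gcongr; exact h k
      _ = (M * q ^ (k + 2)) ^ 3 * f k ^ (3 / 2 : ℝ) := by ring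
      _ = ((M * q ^ (k + 2)) ^ 2 * f k) ^ (3 / 2 : ℝ) := by
        rw [mul_rpow (by positivity) (hf k), sq_rpow_three_halves (by positivity)]
  simpa using le_rpow_pow_of_succ_le_rpow (g := fun k => (M * q ^ (k + 2)) ^ 2 * f k)
    (fun k => mul_nonneg (sq_nonneg _) (hf k)) (by norm_num) hweighted k

lemma limsup_rpow_le_of_succ_le {f : ℕ → ℝ} {M q p : ℝ} (hf : ∀ k, 0 ≤ f k) (hM : 0 < M)
    (hq : 1 < q) (hp : 0 < p) (h : ∀ k, f (k + 1) ≤ M * q ^ k * f k ^ (3 / 2 : ℝ)) :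
    limsup (fun k : ℕ => f k ^ (1 / (p * (3 / 2 : ℝ) ^ k))) atTop ≤
      ((M * q ^ 2) ^ 2 * f 0) ^ (1 / p) := by
  have hweight : ∀ᶠ k : ℕ in atTop, 1 ≤ (M * q ^ (k + 2)) ^ 2 := by
    have : Tendsto (fun k : ℕ => M * q ^ (k + 2)) atTop atTop :=
      ((tendsto_pow_atTop_atTop_of_one_lt hq).comp (tendsto_add_atTop_nat 2)).const_mul_atTop hM
    filter_upwards [this.eventually_ge_atTop 1] with k hk
    nlinarith
  refine limsup_le_of_le (isCoboundedUnder_le_of_le atTop fun k => rpow_nonneg (hf k) _) ?_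
  filter_upwards [hweight] with k hk
  have hfk : f k ≤ ((M * q ^ 2) ^ 2 * f 0) ^ (3 / 2 : ℝ) ^ k :=
    (le_mul_of_one_le_left (hf k) hk).trans (moser_iteration hf hM.le (by linarith) h k)
  calc f k ^ (1 / (p * (3 / 2 : ℝ) ^ k))
      ≤ (((M * q ^ 2) ^ 2 * f 0) ^ (3 / 2 : ℝ) ^ k) ^ (1 / (p * (3 / 2 : ℝ) ^ k)) :=
        rpow_le_rpow (hf k) hfk (by positivity)
    _ = ((M * q ^ 2) ^ 2 * f 0) ^ (1 / p) := by
        rw [← rpow_mul (mul_nonneg (sq_nonneg _) (hf 0))]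
        congr 1
        field_simp

noncomputable def moserTime (t : ℝ) (k : ℕ) : ℝ := t * (1 - (3 / 2 : ℝ) ^ (-(k : ℝ) - 1))

noncomputable def moserRadius (r : ℝ) (k : ℕ) : ℝ := r / 2 * (1 + (3 / 2 : ℝ) ^ (-(k : ℝ) / 2))

lemma moserTime_eq (t : ℝ) (k : ℕ) : moserTime t k = t * (1 - 2 / (3 * (3 / 2) ^ k)) := by
  rw [moserTime, rpow_sub (by norm_num), rpow_neg (by norm_num), rpow_natCast, rpow_one]
  field_simp

lemma moserRadius_eq (r : ℝ) (k : ℕ) : moserRadius r k = r / 2 * (1 + √(2 / 3) ^ k) := by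
  rw [moserRadius, sqrt_eq_rpow, ← rpow_natCast, ← rpow_mul (by norm_num),
    show (2 / 3 : ℝ) = (3 / 2)⁻¹ by norm_num, inv_rpow (by norm_num), ← rpow_neg (by norm_num)]
  ring_nf

lemma moserTime_nonneg {t : ℝ} (ht : 0 ≤ t) (k : ℕ) : 0 ≤ moserTime t k := by
  have : (1 : ℝ) ≤ (3 / 2) ^ k := one_le_pow₀ (by norm_num)
  rw [moserTime_eq]
  refine mul_nonneg ht (sub_nonneg.2 ?_)
  rw [div_le_one (by positivity)]
  linarith

lemma moserTime_lt {t : ℝ} (ht : 0 < t) (k : ℕ) : moserTime t k < t := by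
  rw [moserTime_eq]
  nlinarith [show 0 < 2 / (3 * (3 / 2 : ℝ) ^ k) by positivity]

lemma five_ninths_mul_le_moserTime_succ {t : ℝ} (ht : 0 ≤ t) (k : ℕ) :
    5 / 9 * t ≤ moserTime t (k + 1) := by
  have : (1 : ℝ) ≤ (3 / 2) ^ k := one_le_pow₀ (by norm_num)
  rw [moserTime_eq, pow_succ]
  have : 2 / (3 * ((3 / 2 : ℝ) ^ k * (3 / 2))) ≤ 4 / 9 := by
    rw [div_le_iff₀ (by positivity)]; nlinarith
  nlinarith

lemma moserTime_succ_sub (t : ℝ) (k : ℕ) :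
    moserTime t (k + 1) - moserTime t k = 2 * t / (9 * (3 / 2) ^ k) := by
  rw [moserTime_eq, moserTime_eq, pow_succ]
  field_simp
  ring

lemma moserTime_lt_succ {t : ℝ} (ht : 0 < t) (k : ℕ) : moserTime t k < moserTime t (k + 1) := by
  have := moserTime_succ_sub t k
  have : 0 < 2 * t / (9 * (3 / 2 : ℝ) ^ k) := by positivity
  linarith

lemma moserRadius_sub_succ (r : ℝ) (k : ℕ) :
    moserRadius r k - moserRadius r (k + 1) = r / 2 * (1 - √(2 / 3)) * √(2 / 3) ^ k := by
  rw [moserRadius_eq, moserRadius_eq, pow_succ]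
  ring

lemma sqrt_two_thirds_le : √(2 / 3 : ℝ) ≤ 5 / 6 := by
  rw [sqrt_le_left (by norm_num)]
  norm_num

lemma moserRadius_pos {r : ℝ} (hr : 0 < r) (k : ℕ) : 0 < moserRadius r k := by
  rw [moserRadius_eq]; positivity

lemma moserRadius_zero (r : ℝ) : moserRadius r 0 = r := by
  rw [moserRadius_eq]; ring

lemma moserRadius_succ_lt {r : ℝ} (hr : 0 < r) (k : ℕ) :
    moserRadius r (k + 1) < moserRadius r k := by
  have := sqrt_two_thirds_le
  have := moserRadius_sub_succ r k
  have : 0 < r / 2 * (1 - √(2 / 3)) * √(2 / 3) ^ k := by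
    have : 0 < 1 - √(2 / 3 : ℝ) := by linarith
    positivity
  linarith

lemma moserRadius_sub_succ_sq_mul (r : ℝ) (k : ℕ) :
    (moserRadius r k - moserRadius r (k + 1)) ^ 2 * (3 / 2) ^ k =
      r ^ 2 / 4 * (1 - √(2 / 3)) ^ 2 := by
  have hρ : √(2 / 3 : ℝ) ^ 2 = 2 / 3 := sq_sqrt (by norm_num)
  have hinv : (2 / 3 : ℝ) ^ k * (3 / 2) ^ k = 1 := by rw [← mul_pow]; norm_num
  rw [moserRadius_sub_succ, mul_pow, ← pow_mul, mul_comm k, pow_mul, hρ]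
  linear_combination (r ^ 2 / 4 * (1 - √(2 / 3)) ^ 2) * hinv

lemma moser_bracket_le {c C C₁ μ A t r : ℝ} (hc : 0 ≤ c) (hcC : c ≤ C) (hC₁ : 0 ≤ C₁) (hμ : 0 ≤ μ)
    (ht : 0 < t) (hr : 0 < r) (k : ℕ) :
    c * μ ^ 3 * A ^ 2 / moserTime t (k + 1) + 1 / (moserTime t (k + 1) - moserTime t k) +
        C₁ / (moserRadius r k - moserRadius r (k + 1)) ^ 2 ≤
      (2 * C + 5 + 144 * C₁) * ((1 + A ^ 2 * μ ^ 3) / t + 1 / r ^ 2) * (3 / 2) ^ k := by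
  set y : ℝ := (3 / 2) ^ k
  have hy : 1 ≤ y := one_le_pow₀ (by norm_num)
  set X := (1 + A ^ 2 * μ ^ 3) / t
  have hX : 0 ≤ X := by positivity
  have hC : 0 ≤ C := hc.trans hcC
  have hdrift : c * μ ^ 3 * A ^ 2 / moserTime t (k + 1) ≤ 2 * C * X := by
    have hAμ : 0 ≤ A ^ 2 * μ ^ 3 := by positivity
    calc c * μ ^ 3 * A ^ 2 / moserTime t (k + 1) ≤ c * μ ^ 3 * A ^ 2 / (5 / 9 * t) := by
          gcongr
          exact five_ninths_mul_le_moserTime_succ ht.le k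
      _ = 9 / 5 * (c * (A ^ 2 * μ ^ 3)) / t := by field_simp
      _ ≤ 2 * C * X := by
          simp only [X]
          rw [mul_div_assoc']
          gcongr ?_ / t
          nlinarith [mul_le_mul_of_nonneg_right hcC hAμ]
  have htime : 1 / (moserTime t (k + 1) - moserTime t k) ≤ 5 * y * X := by
    rw [moserTime_succ_sub, one_div_div, mul_div_assoc', div_le_div_iff₀ (by positivity) ht]
    nlinarith [mul_nonneg (zero_le_one.trans hy) (by positivity : 0 ≤ A ^ 2 * μ ^ 3)]
  have hradius : C₁ / (moserRadius r k - moserRadius r (k + 1)) ^ 2 ≤ 144 * C₁ * y / r ^ 2 := by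
    have hgap := moserRadius_sub_succ_sq_mul r k
    have : 1 / 6 ≤ 1 - √(2 / 3 : ℝ) := by linarith [sqrt_two_thirds_le]
    have : 0 < moserRadius r k - moserRadius r (k + 1) := sub_pos.2 (moserRadius_succ_lt hr k)
    rw [div_le_div_iff₀ (by positivity) (by positivity)]
    calc C₁ * r ^ 2 = 144 * C₁ * (r ^ 2 / 4 * (1 / 6) ^ 2) := by ring
      _ ≤ 144 * C₁ * (r ^ 2 / 4 * (1 - √(2 / 3)) ^ 2) := by gcongr
      _ = 144 * C₁ * y * (moserRadius r k - moserRadius r (k + 1)) ^ 2 := by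
          rw [← hgap]; ring
  have hR : 0 ≤ 1 / r ^ 2 := by positivity
  have hy0 : 0 ≤ y := zero_le_one.trans hy
  calc _ ≤ 2 * C * X + 5 * y * X + 144 * C₁ * y / r ^ 2 := by gcongr
    _ ≤ (2 * C + 5 + 144 * C₁) * (X + 1 / r ^ 2) * y := by
      have hsplit : (2 * C + 5 + 144 * C₁) * (X + 1 / r ^ 2) * y -
          (2 * C * X + 5 * y * X + 144 * C₁ * y / r ^ 2) =
          2 * C * X * (y - 1) + 144 * C₁ * X * y + (2 * C + 5) * (1 / r ^ 2) * y := by ring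
      have : 0 ≤ 2 * C * X * (y - 1) + 144 * C₁ * X * y + (2 * C + 5) * (1 / r ^ 2) * y := by
        have := sub_nonneg.2 hy
        positivity
      linarith

lemma moser_step {H : ℝ → ℝ → ℝ → ℝ} {Cp : ℝ → ℝ} {C C₁ p₀ T A μ t r : ℝ} (hC₁ : 0 ≤ C₁)
    (hp₀ : 0 ≤ p₀) (hA : 0 ≤ A) (hμ : 0 ≤ μ) (hH : ∀ p τ r, 0 ≤ H p τ r)
    (hCp : ∀ p, p₀ ≤ p → 0 ≤ Cp p ∧ Cp p ≤ C)
    (hrec : ∀ p, p₀ ≤ p → ∀ τ τ' r r', 0 ≤ τ → τ < τ' → τ' < T → 0 < r' → r' < r →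
      H (3 / 2 * p) τ' r' ≤
        A * (Cp p * μ ^ 3 * A ^ 2 / τ' + 1 / (τ' - τ) + C₁ / (r - r') ^ 2) ^ ((3 : ℝ) / 2) *
          H p τ r ^ ((3 : ℝ) / 2))
    (ht : 0 < t) (htT : t < T) (hr : 0 < r) (k : ℕ) :
    H (p₀ * (3 / 2) ^ (k + 1)) (moserTime t (k + 1)) (moserRadius r (k + 1)) ≤
      A * ((2 * C + 5 + 144 * C₁) * ((1 + A ^ 2 * μ ^ 3) / t + 1 / r ^ 2)) ^ (3 / 2 : ℝ) *
        ((3 / 2 : ℝ) ^ (3 / 2 : ℝ)) ^ k *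
          H (p₀ * (3 / 2) ^ k) (moserTime t k) (moserRadius r k) ^ (3 / 2 : ℝ) := by
  set L := (2 * C + 5 + 144 * C₁) * ((1 + A ^ 2 * μ ^ 3) / t + 1 / r ^ 2)
  have hp : p₀ ≤ p₀ * (3 / 2) ^ k := le_mul_of_one_le_right hp₀ (one_le_pow₀ (by norm_num))
  obtain ⟨hc, hcC⟩ := hCp _ hp
  have hC : 0 ≤ C := hc.trans hcC
  have hbracket_nonneg : 0 ≤ Cp (p₀ * (3 / 2) ^ k) * μ ^ 3 * A ^ 2 / moserTime t (k + 1) +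
      1 / (moserTime t (k + 1) - moserTime t k) +
        C₁ / (moserRadius r k - moserRadius r (k + 1)) ^ 2 := by
    have := moserTime_nonneg ht.le (k + 1)
    rw [moserTime_succ_sub]
    positivity
  calc H (p₀ * (3 / 2) ^ (k + 1)) (moserTime t (k + 1)) (moserRadius r (k + 1))
      = H (3 / 2 * (p₀ * (3 / 2) ^ k)) (moserTime t (k + 1)) (moserRadius r (k + 1)) := by
        rw [pow_succ, mul_comm (3 / 2 : ℝ), mul_assoc]
    _ ≤ A * (Cp (p₀ * (3 / 2) ^ k) * μ ^ 3 * A ^ 2 / moserTime t (k + 1) +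
          1 / (moserTime t (k + 1) - moserTime t k) +
            C₁ / (moserRadius r k - moserRadius r (k + 1)) ^ 2) ^ (3 / 2 : ℝ) *
          H (p₀ * (3 / 2) ^ k) (moserTime t k) (moserRadius r k) ^ (3 / 2 : ℝ) :=
        hrec _ hp _ _ _ _ (moserTime_nonneg ht.le k) (moserTime_lt_succ ht k)
          ((moserTime_lt ht _).trans htT) (moserRadius_pos hr _) (moserRadius_succ_lt hr k)
    _ ≤ A * (L * (3 / 2) ^ k) ^ (3 / 2 : ℝ) *
          H (p₀ * (3 / 2) ^ k) (moserTime t k) (moserRadius r k) ^ (3 / 2 : ℝ) := by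
        have := hH (p₀ * (3 / 2) ^ k) (moserTime t k) (moserRadius r k)
        gcongr
        exact moser_bracket_le hc hcC hC₁ hμ ht hr k
    _ = _ := by
        rw [mul_rpow (by positivity) (by positivity), ← rpow_pow_comm (by norm_num)]
        ring

lemma rpow_one_div_le {D a e h p : ℝ} (hD : 1 ≤ D) (ha : 0 ≤ a) (he : 0 ≤ e) (hh : 0 ≤ h)
    (hp : 1 ≤ p) :
    (D * a ^ 2 * e ^ 3 * h) ^ (1 / p) ≤ D * a ^ (2 / p) * e ^ (3 / p) * h ^ (1 / p) := by
  rw [mul_rpow (by positivity) hh, mul_rpow (by positivity) (by positivity),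
    mul_rpow (by positivity) (by positivity), ← rpow_natCast a, ← rpow_mul ha, ← rpow_natCast e,
    ← rpow_mul he]
  push_cast
  rw [mul_one_div, mul_one_div]
  gcongr
  exact rpow_le_self_of_one_le hD ((div_le_one (by linarith)).2 hp)

theorem stmt_9 (C C₁ p₀ : ℝ) (hC : 0 < C) (hC₁ : 0 < C₁) (hp₀ : 1 < p₀) :
    ∃ C' : ℝ, 0 < C' ∧
      ∀ (T A μ : ℝ) (H : ℝ → ℝ → ℝ → ℝ) (Cp : ℝ → ℝ),
        0 < T → 1 ≤ A → 0 ≤ μ →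
        (∀ p τ r, 0 ≤ H p τ r) →
        (∀ p, p₀ ≤ p → 0 ≤ Cp p ∧ Cp p ≤ C) →
        (∀ p, p₀ ≤ p → ∀ τ τ' r r', 0 ≤ τ → τ < τ' → τ' < T → 0 < r' → r' < r →
          H (3 / 2 * p) τ' r' ≤
            A * (Cp p * μ ^ 3 * A ^ 2 / τ' + 1 / (τ' - τ) + C₁ / (r - r') ^ 2) ^ ((3 : ℝ) / 2) *
              H p τ r ^ ((3 : ℝ) / 2)) →
        (∀ p r τ₁ τ₂, τ₁ ≤ τ₂ → H p τ₂ r ≤ H p τ₁ r) →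
        (∀ p τ r₁ r₂, r₁ ≤ r₂ → H p τ r₁ ≤ H p τ r₂) →
        ∀ t r, 0 < t → t < T → 0 < r →
          limsup (fun k : ℕ =>
              H (p₀ * (3 / 2 : ℝ) ^ k) (t * (1 - (3 / 2 : ℝ) ^ (-(k : ℝ) - 1)))
                  (r / 2 * (1 + (3 / 2 : ℝ) ^ (-(k : ℝ) / 2))) ^
                (1 / (p₀ * (3 / 2 : ℝ) ^ k))) atTop ≤
            C' * A ^ ((2 : ℝ) / p₀) * ((1 + A ^ 2 * μ ^ 3) / t + 1 / r ^ 2) ^ ((3 : ℝ) / p₀) *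
              H p₀ 0 r ^ (1 / p₀) := by
  refine ⟨(3 / 2) ^ 6 * (2 * C + 5 + 144 * C₁) ^ 3, by positivity, ?_⟩
  intro T A μ H Cp _ hA hμ hH hCp hrec hmono_τ _ t r ht htT hr
  set K := 2 * C + 5 + 144 * C₁
  set E := (1 + A ^ 2 * μ ^ 3) / t + 1 / r ^ 2
  have hK : 1 ≤ K := by linarith
  have hq : (1 : ℝ) < (3 / 2) ^ (3 / 2 : ℝ) := one_lt_rpow (by norm_num) (by norm_num)
  have hlim := limsup_rpow_le_of_succ_le (p := p₀) (M := A * (K * E) ^ (3 / 2 : ℝ))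
    (f := fun k => H (p₀ * (3 / 2) ^ k) (moserTime t k) (moserRadius r k)) (fun k => hH _ _ _)
    (by positivity) hq (by linarith)
    (moser_step hC₁.le (by linarith) (by linarith) hμ hH hCp hrec ht htT hr)
  have h0 : H (p₀ * (3 / 2) ^ 0) (moserTime t 0) (moserRadius r 0) ≤ H p₀ 0 r := by
    rw [pow_zero, mul_one, moserRadius_zero]
    exact hmono_τ _ _ _ _ (moserTime_nonneg ht.le 0)
  have hconst : (A * (K * E) ^ (3 / 2 : ℝ) * ((3 / 2 : ℝ) ^ (3 / 2 : ℝ)) ^ 2) ^ 2 =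
      (3 / 2) ^ 6 * K ^ 3 * A ^ 2 * E ^ 3 := by
    rw [mul_pow, mul_pow, rpow_three_halves_sq (by positivity),
      rpow_three_halves_sq (by norm_num)]
    ring
  refine hlim.trans ?_
  calc _ ≤ ((3 / 2) ^ 6 * K ^ 3 * A ^ 2 * E ^ 3 * H p₀ 0 r) ^ (1 / p₀) := by
        rw [← hconst]
        have := hH (p₀ * (3 / 2) ^ 0) (moserTime t 0) (moserRadius r 0)
        gcongr
    _ ≤ _ := rpow_one_div_le (one_le_mul_of_one_le_of_one_le (one_le_pow₀ (by norm_num))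
        (one_le_pow₀ hK)) (by linarith) (by positivity) (hH _ _ _) hp₀.le
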